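/- arXiv:2010.11293 — 2 statements merged into one kernel-verified Lean document; each statement's English description precedes it below -/
import Mathlib

section
/- Let E be a deflation-exact category satisfying axiom (R0*). Then: (1) every P-deflation f : X → Y has a kernel K → X, and K → X → Y is a kernel-cokernel pair; (2) P-deflations are stable under pullback; (3) the class of kernel-cokernel pairs whose second morphism is a P-deflation defines a deflation-exact structure on the underlying additive category of E, containing the original conflations, which satisfies axiom (R3−). -/
open CategoryTheory CategoryTheory.Limits ZeroObject

attribute [local instance] CategoryTheory.Limits.hasBinaryBiproducts_of_finite_biproducts

universe v u

section Preamble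

variable {C : Type u} [Category.{v} C] [Preadditive C] [HasZeroObject C]
  [HasFiniteBiproducts C]

/-- `(f, g)` is a kernel-cokernel pair: `f` is a kernel of `g` and `g` is a cokernel of `f`. -/
structure IsKernelCokernelPair {X Y Z : C} (f : X ⟶ Y) (g : Y ⟶ Z) : Prop where
  comp_zero : f ≫ g = 0
  isKernel : Nonempty (IsLimit (KernelFork.ofι f comp_zero))
  isCokernel : Nonempty (IsColimit (CokernelCofork.ofπ g comp_zero))

/-- `k` is a kernel of `g`. -/
def IsKernelOf {K Y Z : C} (k : K ⟶ Y) (g : Y ⟶ Z) : Prop :=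
  ∃ w : k ≫ g = 0, Nonempty (IsLimit (KernelFork.ofι k w))

/-- `c` is a cokernel of `f`. -/
def IsCokernelOf {X Y Q : C} (c : Y ⟶ Q) (f : X ⟶ Y) : Prop :=
  ∃ w : f ≫ c = 0, Nonempty (IsColimit (CokernelCofork.ofπ c w))

/-- All pullbacks along `g` exist. -/
def HasAllPullbacksAlong {Y Z : C} (g : Y ⟶ Z) : Prop :=
  ∀ ⦃W : C⦄ (h : W ⟶ Z), ∃ (P : C) (p₁ : P ⟶ Y) (p₂ : P ⟶ W), IsPullback p₁ p₂ g h

/-- An additive category is weakly idempotent complete if every retraction has a kernel. -/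
def WeaklyIdempotentComplete (C : Type u) [Category.{v} C] [Preadditive C]
    [HasZeroObject C] [HasFiniteBiproducts C] : Prop :=
  ∀ ⦃X Y : C⦄ (r : X ⟶ Y), (∃ s : Y ⟶ X, s ≫ r = 𝟙 Y) → HasKernel r

end Preamble

/-- A conflation structure on an additive category: a class of kernel-cokernel pairs
closed under isomorphisms.  The first morphism of a conflation is called an inflation,
the second a deflation. -/
structure ConflationStruct (C : Type u) [Category.{v} C] [Preadditive C]
    [HasZeroObject C] [HasFiniteBiproducts C] where
  IsConflation : ∀ ⦃X Y Z : C⦄, (X ⟶ Y) → (Y ⟶ Z) → Prop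
  kernelCokernel : ∀ ⦃X Y Z : C⦄ ⦃f : X ⟶ Y⦄ ⦃g : Y ⟶ Z⦄,
    IsConflation f g → IsKernelCokernelPair f g
  iso_closed : ∀ ⦃X Y Z X' Y' Z' : C⦄ ⦃f : X ⟶ Y⦄ ⦃g : Y ⟶ Z⦄ ⦃f' : X' ⟶ Y'⦄ ⦃g' : Y' ⟶ Z'⦄
    (eX : X ≅ X') (eY : Y ≅ Y') (eZ : Z ≅ Z'),
    f ≫ eY.hom = eX.hom ≫ f' → g ≫ eZ.hom = eY.hom ≫ g' →
    IsConflation f g → IsConflation f' g'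

namespace ConflationStruct

variable {C : Type u} [Category.{v} C] [Preadditive C] [HasZeroObject C]
  [HasFiniteBiproducts C] (S : ConflationStruct C)

/-- A morphism is an inflation if it is the first morphism of some conflation. -/
def IsInflation {X Y : C} (f : X ⟶ Y) : Prop := ∃ (Z : C) (g : Y ⟶ Z), S.IsConflation f g

/-- A morphism is a deflation if it is the second morphism of some conflation. -/
def IsDeflation {Y Z : C} (g : Y ⟶ Z) : Prop := ∃ (X : C) (f : X ⟶ Y), S.IsConflation f g

/-- A deflation-exact category: axioms (R0), (R1), (R2). -/
structure IsDeflationExact : Prop where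
  R0 : S.IsDeflation (𝟙 (0 : C))
  R1 : ∀ ⦃X Y Z : C⦄ ⦃g : X ⟶ Y⦄ ⦃h : Y ⟶ Z⦄,
    S.IsDeflation g → S.IsDeflation h → S.IsDeflation (g ≫ h)
  R2 : ∀ ⦃Y Z : C⦄ ⦃g : Y ⟶ Z⦄, S.IsDeflation g → ∀ ⦃W : C⦄ (h : W ⟶ Z),
    ∃ (P : C) (p₁ : P ⟶ Y) (p₂ : P ⟶ W), IsPullback p₁ p₂ g h ∧ S.IsDeflation p₂

/-- An inflation-exact category: axioms (L0), (L1), (L2). -/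
structure IsInflationExact : Prop where
  L0 : S.IsInflation (𝟙 (0 : C))
  L1 : ∀ ⦃X Y Z : C⦄ ⦃f : X ⟶ Y⦄ ⦃g : Y ⟶ Z⦄,
    S.IsInflation f → S.IsInflation g → S.IsInflation (f ≫ g)
  L2 : ∀ ⦃X Y : C⦄ ⦃f : X ⟶ Y⦄, S.IsInflation f → ∀ ⦃W : C⦄ (h : X ⟶ W),
    ∃ (Q : C) (q₁ : Y ⟶ Q) (q₂ : W ⟶ Q), IsPushout f h q₁ q₂ ∧ S.IsInflation q₂

/-- Axiom (R0*): for every object `A`, the morphism `A ⟶ 0` is a deflation. -/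
def AxiomR0star : Prop := ∀ A : C, S.IsDeflation (0 : A ⟶ (0 : C))

/-- Axiom (R3), the obscure axiom: if `p` has a kernel and `i ≫ p` is a deflation,
then `p` is a deflation. -/
def AxiomR3 : Prop := ∀ ⦃A B Q : C⦄ (i : A ⟶ B) (p : B ⟶ Q),
  HasKernel p → S.IsDeflation (i ≫ p) → S.IsDeflation p

/-- Axiom (R3−): if `f ≫ g` is a deflation and all pullbacks along `g` exist,
then `g` is a deflation. -/
def AxiomR3minus : Prop := ∀ ⦃X Y Z : C⦄ (f : X ⟶ Y) (g : Y ⟶ Z),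
  S.IsDeflation (f ≫ g) → HasAllPullbacksAlong g → S.IsDeflation g

/-- Axiom (R3+): if `f ≫ g` is a deflation, then `g` is a deflation. -/
def AxiomR3plus : Prop := ∀ ⦃X Y Z : C⦄ (f : X ⟶ Y) (g : Y ⟶ Z),
  S.IsDeflation (f ≫ g) → S.IsDeflation g

/-- A morphism is admissible if it factors as a deflation followed by an inflation. -/
def IsAdmissible {X Y : C} (f : X ⟶ Y) : Prop :=
  ∃ (I : C) (e : X ⟶ I) (m : I ⟶ Y), S.IsDeflation e ∧ S.IsInflation m ∧ e ≫ m = f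

/-- Exactness of a pair of composable admissible morphisms at the middle object:
the inflation (image) part of `f` is a kernel of `g`, and the deflation (coimage)
part of `g` is a cokernel of `f`. -/
def ExactAt {X Y Z : C} (f : X ⟶ Y) (g : Y ⟶ Z) : Prop :=
  (∃ (I : C) (e : X ⟶ I) (m : I ⟶ Y),
    S.IsDeflation e ∧ S.IsInflation m ∧ e ≫ m = f ∧ IsKernelOf m g) ∧
  (∃ (J : C) (e' : Y ⟶ J) (m' : J ⟶ Z),
    S.IsDeflation e' ∧ S.IsInflation m' ∧ e' ≫ m' = g ∧ IsCokernelOf e' f)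

/-- A `P`-deflation: (P1) all pullbacks along `f` exist, and (P2) there is a morphism
`h` such that `h ≫ f` is a deflation. -/
def IsPDeflation {X Y : C} (f : X ⟶ Y) : Prop :=
  HasAllPullbacksAlong f ∧ ∃ (W : C) (h : W ⟶ X), S.IsDeflation (h ≫ f)

end ConflationStruct


section Helpers

variable {C : Type u} [Category.{v} C] [Preadditive C] [HasZeroObject C]
  [HasFiniteBiproducts C] (S : ConflationStruct C)

lemma deflation_epi {Y Z : C} {g : Y ⟶ Z} (hg : S.IsDeflation g) : Epi g := by
  obtain ⟨X, f, hc⟩ := hg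
  obtain ⟨w, -, ⟨hcol⟩⟩ := S.kernelCokernel hc
  exact ⟨fun a b hab => Cofork.IsColimit.hom_ext hcol (by simpa using hab)⟩

/-- If all pullbacks along `f` exist, then `f` has a kernel. -/
lemma kernel_of_pullbacks {X Y : C} {f : X ⟶ Y} (hP1 : HasAllPullbacksAlong f) :
    ∃ (K : C) (k : K ⟶ X) (w : k ≫ f = 0), Nonempty (IsLimit (KernelFork.ofι k w)) := by
  obtain ⟨K, k, t, hpb⟩ := hP1 (0 : (0 : C) ⟶ Y)
  have w : k ≫ f = 0 := by rw [hpb.w, comp_zero]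
  refine ⟨K, k, w, ⟨KernelFork.IsLimit.ofι k w
    (fun {W'} g' eq' => hpb.lift g' 0 (by rw [eq', zero_comp]))
    (fun {W'} g' eq' => hpb.lift_fst g' 0 _)
    (fun {W'} g' eq' m hm => ?_)⟩⟩
  refine hpb.hom_ext ?_ ((isZero_zero C).eq_of_tgt _ _)
  rw [hm, hpb.lift_fst]

/-- Every `P`-deflation, together with its kernel, forms a kernel-cokernel pair. -/
lemma pdeflation_kcp (hDE : S.IsDeflationExact) {X Y : C} {f : X ⟶ Y}
    (hf : S.IsPDeflation f) : ∃ (K : C) (k : K ⟶ X), IsKernelCokernelPair k f := by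
  obtain ⟨hP1, W, h, hd⟩ := hf
  obtain ⟨K, k, w, ⟨hker⟩⟩ := kernel_of_pullbacks hP1
  haveI hepi : Epi f := by
    haveI := deflation_epi S hd
    exact epi_of_epi h f
  -- the kernel of the deflation `h ≫ f`
  obtain ⟨Kd, kd, hcd⟩ := hd
  obtain ⟨wd, -, ⟨hcolim⟩⟩ := S.kernelCokernel hcd
  -- pull back the deflation `h ≫ f` along `f`
  obtain ⟨P, q₁, q₂, hpb, hq₂⟩ := hDE.R2 ⟨Kd, kd, hcd⟩ f
  haveI hq2epi : Epi q₂ := deflation_epi S hq₂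
  refine ⟨K, k, ⟨w, ⟨hker⟩, ⟨CokernelCofork.IsColimit.ofπ' f w
    (fun {T} u hu => ?_)⟩⟩⟩
  -- `kd ≫ h` factors through the kernel `k`
  obtain ⟨w', hw'⟩ := KernelFork.IsLimit.lift' hker (kd ≫ h)
    (by rw [Category.assoc, wd])
  simp only [Fork.ι_ofι] at hw'
  have hu' : kd ≫ (h ≫ u) = 0 := by
    rw [← Category.assoc, ← hw', Category.assoc, hu, comp_zero]
  obtain ⟨v, hv⟩ := CokernelCofork.IsColimit.desc' hcolim (h ≫ u) hu'
  simp only [Cofork.π_ofπ] at hv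
  -- `q₂ - q₁ ≫ h` factors through the kernel `k`
  obtain ⟨w'', hw''⟩ := KernelFork.IsLimit.lift' hker (q₂ - q₁ ≫ h)
    (by rw [Preadditive.sub_comp, Category.assoc, ← hpb.w, sub_self])
  simp only [Fork.ι_ofι] at hw''
  have key : q₂ ≫ u = (q₁ ≫ h) ≫ u := by
    have : (q₂ - q₁ ≫ h) ≫ u = 0 := by
      rw [← hw'', Category.assoc, hu, comp_zero]
    rw [Preadditive.sub_comp, sub_eq_zero] at this
    exact this
  refine ⟨v, ?_⟩
  rw [← cancel_epi q₂, ← Category.assoc, ← hpb.w, Category.assoc, hv,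
    ← Category.assoc, ← key]

end Helpers

/-- Let `E` be a deflation-exact category satisfying axiom (R0*).  Then:
(1) every `P`-deflation `f : X ⟶ Y` has a kernel `K ⟶ X` and `K ⟶ X ⟶ Y` is a
kernel-cokernel pair; (2) `P`-deflations are stable under pullback; (3) the class
of kernel-cokernel pairs whose second morphism is a `P`-deflation defines a
deflation-exact structure containing the original conflations and satisfying
axiom (R3−): every deflation is a `P`-deflation, the identity of `0` is a
`P`-deflation, `P`-deflations compose, and if `f ≫ g` is a `P`-deflation and all
pullbacks along `g` exist then `g` is a `P`-deflation. -/
theorem P_deflations_form_deflation_exact_structure {C : Type u} [Category.{v} C]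
    [Preadditive C] [HasZeroObject C] [HasFiniteBiproducts C] (S : ConflationStruct C)
    (hDE : S.IsDeflationExact) (hR0s : S.AxiomR0star) :
    (∀ (X Y : C) (f : X ⟶ Y), S.IsPDeflation f →
      ∃ (K : C) (k : K ⟶ X), IsKernelCokernelPair k f) ∧
    (∀ (P X Y W : C) (f : X ⟶ Y) (h : W ⟶ Y) (p₁ : P ⟶ X) (p₂ : P ⟶ W),
      S.IsPDeflation f → IsPullback p₁ p₂ f h → S.IsPDeflation p₂) ∧
    (∀ (Y Z : C) (g : Y ⟶ Z), S.IsDeflation g → S.IsPDeflation g) ∧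
    S.IsPDeflation (𝟙 (0 : C)) ∧
    (∀ (X Y Z : C) (f : X ⟶ Y) (g : Y ⟶ Z),
      S.IsPDeflation f → S.IsPDeflation g → S.IsPDeflation (f ≫ g)) ∧
    (∀ (X Y Z : C) (f : X ⟶ Y) (g : Y ⟶ Z),
      S.IsPDeflation (f ≫ g) → HasAllPullbacksAlong g → S.IsPDeflation g) := by
  constructor
  · intro X Y f hf
    exact pdeflation_kcp S hDE hf
  constructor
  · -- pullback stability
    intro P X Y W f h p₁ p₂ hf hpb
    obtain ⟨hP1, W', a, had⟩ := hf
    constructor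
    · intro V m
      obtain ⟨Q, q₁, q₂, hq⟩ := hP1 (m ≫ h)
      have hcomm : q₁ ≫ f = (q₂ ≫ m) ≫ h := by rw [hq.w, Category.assoc]
      set u := hpb.lift q₁ (q₂ ≫ m) hcomm with hu
      have h1 : u ≫ p₁ = q₁ := hpb.lift_fst _ _ _
      have h2 : u ≫ p₂ = q₂ ≫ m := hpb.lift_snd _ _ _
      have hs : IsPullback (u ≫ p₁) q₂ f (m ≫ h) := by rw [h1]; exact hq
      exact ⟨Q, u, q₂, hs.of_right h2 hpb⟩
    · obtain ⟨Q, t₁, t₂, ht, ht₂⟩ := hDE.R2 had h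
      have hcomm : (t₁ ≫ a) ≫ f = t₂ ≫ h := by rw [Category.assoc]; exact ht.w
      refine ⟨Q, hpb.lift (t₁ ≫ a) t₂ hcomm, ?_⟩
      rw [hpb.lift_snd]
      exact ht₂
  have defl_to_p : ∀ (Y Z : C) (g : Y ⟶ Z), S.IsDeflation g → S.IsPDeflation g := by
    intro Y Z g hg
    constructor
    · intro W h
      obtain ⟨P, p₁, p₂, hpb, -⟩ := hDE.R2 hg h
      exact ⟨P, p₁, p₂, hpb⟩
    · exact ⟨Y, 𝟙 Y, by rwa [Category.id_comp]⟩
  refine ⟨defl_to_p, defl_to_p _ _ _ hDE.R0, ?_, ?_⟩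
  · -- composition
    intro X Y Z f g hf hg
    obtain ⟨hPf, W₁, a, ha⟩ := hf
    obtain ⟨hPg, W₂, b, hb⟩ := hg
    constructor
    · intro W h
      obtain ⟨P, p₁, p₂, hp⟩ := hPg h
      obtain ⟨Q, q₁, q₂, hq⟩ := hPf p₁
      exact ⟨Q, q₁, q₂ ≫ p₂, hq.paste_vert hp⟩
    · obtain ⟨Q, t₁, t₂, ht, ht₂⟩ := hDE.R2 ha b
      refine ⟨Q, t₁ ≫ a, ?_⟩
      have : (t₁ ≫ a) ≫ f ≫ g = t₂ ≫ b ≫ g := by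
        rw [← Category.assoc, ← Category.assoc, Category.assoc t₁ a f, ht.w,
          Category.assoc]
      rw [this]
      exact hDE.R1 ht₂ hb
  · -- (R3−)
    intro X Y Z f g hfg hPg
    obtain ⟨-, W, a, ha⟩ := hfg
    refine ⟨hPg, W, a ≫ f, ?_⟩
    rw [Category.assoc]
    exact ha
end

section
/- Let D ⊆ D' be two deflation-exact structures on an additive category A, and assume that (A, D) satisfies axiom (R3−). Then: (1) if (A, D') satisfies axiom (R3), so does (A, D); if (A, D') satisfies axiom (R3+), so does (A, D); (2) if (A, D') is a Quillen exact category, then (A, D) is a Quillen exact category. -/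
open CategoryTheory CategoryTheory.Limits ZeroObject

attribute [local instance] CategoryTheory.Limits.hasBinaryBiproducts_of_finite_biproducts

universe v u

section Auxiliary

variable {C : Type u} [Category.{v} C] [Preadditive C] [HasZeroObject C]
  [HasFiniteBiproducts C]

lemma aux_epi {X Y Q : C} {f : X ⟶ Y} {d : Y ⟶ Q} {w : f ≫ d = 0}
    (h : IsColimit (CokernelCofork.ofπ d w)) : Epi d :=
  ⟨fun _ _ huv => Cofork.IsColimit.hom_ext h (by simpa using huv)⟩

lemma aux_mono {K Y Z : C} {g : Y ⟶ Z} {k : K ⟶ Y} {w : k ≫ g = 0}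
    (h : IsLimit (KernelFork.ofι k w)) : Mono k :=
  ⟨fun _ _ huv => Fork.IsLimit.hom_ext h (by simpa using huv)⟩

lemma aux_isDefl_of_iso (S : ConflationStruct C) {Y Z Y' Z' : C} (eY : Y ≅ Y') (eZ : Z ≅ Z')
    {g : Y ⟶ Z} {g' : Y' ⟶ Z'} (hcomm : g ≫ eZ.hom = eY.hom ≫ g')
    (hg : S.IsDeflation g) : S.IsDeflation g' := by
  obtain ⟨X, f, hc⟩ := hg
  exact ⟨X, f ≫ eY.hom, S.iso_closed (Iso.refl X) eY eZ (by simp) hcomm hc⟩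

lemma aux_isInfl_of_iso (S : ConflationStruct C) {X X' Y Y' : C} (eX : X ≅ X') (eY : Y ≅ Y')
    {m : X ⟶ Y} {m' : X' ⟶ Y'} (hcomm : m ≫ eY.hom = eX.hom ≫ m')
    (hm : S.IsInflation m) : S.IsInflation m' := by
  obtain ⟨R, r, hc⟩ := hm
  exact ⟨R, eY.inv ≫ r, S.iso_closed eX eY (Iso.refl R) hcomm (by simp) hc⟩

lemma aux_pullbacks (S : ConflationStruct C) (hSd : S.IsDeflationExact) {Y Z : C} {g : Y ⟶ Z}
    (hg : S.IsDeflation g) : HasAllPullbacksAlong g := fun W h => by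
  obtain ⟨P, p₁, p₂, hpb, _⟩ := hSd.R2 hg h
  exact ⟨P, p₁, p₂, hpb⟩

lemma aux_conf_of_kernel (S : ConflationStruct C) {Y Z : C} {g : Y ⟶ Z} (hg : S.IsDeflation g)
    {K : C} {k : K ⟶ Y} (w : k ≫ g = 0) (hk : IsLimit (KernelFork.ofι k w)) :
    S.IsConflation k g := by
  obtain ⟨X, f, hc⟩ := hg
  have pair := S.kernelCokernel hc
  obtain ⟨hl⟩ := pair.isKernel
  have he : (hl.conePointUniqueUpToIso hk).hom ≫ k = f := by
    simpa using hl.conePointUniqueUpToIso_hom_comp hk WalkingParallelPair.zero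
  exact S.iso_closed (hl.conePointUniqueUpToIso hk) (Iso.refl Y) (Iso.refl Z)
    (by simpa using he.symm) (by simp) hc

lemma aux_conf_of_cokernel (S : ConflationStruct C) {X Y : C} {m : X ⟶ Y} (hm : S.IsInflation m)
    {Q : C} {d : Y ⟶ Q} (w : m ≫ d = 0) (hd : IsColimit (CokernelCofork.ofπ d w)) :
    S.IsConflation m d := by
  obtain ⟨R, r, hc⟩ := hm
  have pair := S.kernelCokernel hc
  obtain ⟨hcol⟩ := pair.isCokernel
  have he : r ≫ (hcol.coconePointUniqueUpToIso hd).hom = d := by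
    simpa using IsColimit.comp_coconePointUniqueUpToIso_hom hcol hd WalkingParallelPair.one
  exact S.iso_closed (Iso.refl X) (Iso.refl Y) (hcol.coconePointUniqueUpToIso hd)
    (by simp) (by simpa using he) hc

lemma aux_biprod_map_pullback {Z Y A : C} (p : Y ⟶ A) :
    IsPullback (biprod.snd : Z ⊞ Y ⟶ Y) (biprod.map (𝟙 Z) p) p (biprod.snd : Z ⊞ A ⟶ A) := by
  have comm : (biprod.snd : Z ⊞ Y ⟶ Y) ≫ p = biprod.map (𝟙 Z) p ≫ biprod.snd := by simp
  refine IsPullback.of_isLimit (PullbackCone.IsLimit.mk comm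
    (fun s => biprod.lift (s.snd ≫ biprod.fst) s.fst) (fun s => by simp) (fun s => ?_) ?_)
  · apply biprod.hom_ext
    · simp
    · simpa using s.condition
  · intro s m' h₁ h₂
    apply biprod.hom_ext
    · have := congrArg (· ≫ (biprod.fst : Z ⊞ A ⟶ Z)) h₂
      simpa using this
    · simpa using h₁

end Auxiliary

/-- Let `D ⊆ D'` be two deflation-exact structures on an additive category `A`, and
assume `(A, D)` satisfies axiom (R3−).  Then: (1) if `(A, D')` satisfies axiom (R3)
so does `(A, D)`, and if `(A, D')` satisfies axiom (R3+) so does `(A, D)`;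
(2) if `(A, D')` is a Quillen exact category (i.e. also inflation-exact), then so
is `(A, D)`. -/
theorem obscure_axioms_inherited {C : Type u} [Category.{v} C] [Preadditive C]
    [HasZeroObject C] [HasFiniteBiproducts C]
    (S S' : ConflationStruct C)
    (hsub : ∀ ⦃X Y Z : C⦄ ⦃f : X ⟶ Y⦄ ⦃g : Y ⟶ Z⦄,
      S.IsConflation f g → S'.IsConflation f g)
    (hS : S.IsDeflationExact) (hS' : S'.IsDeflationExact)
    (hR3m : S.AxiomR3minus) :
    (S'.AxiomR3 → S.AxiomR3) ∧
    (S'.AxiomR3plus → S.AxiomR3plus) ∧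
    (S'.IsInflationExact → S.IsInflationExact) := by
  
  have hdsub : ∀ {Y Z : C} {g : Y ⟶ Z}, S.IsDeflation g → S'.IsDeflation g := by
    intro Y Z g hg
    obtain ⟨X, f, h⟩ := hg
    exact ⟨X, f, hsub h⟩
  refine ⟨?_, ?_, ?_⟩
  · -- (R3) is inherited
    intro h3 A B Q i p hker hip
    exact hR3m i p hip (aux_pullbacks S' hS' (h3 i p hker (hdsub hip)))
  · -- (R3+) is inherited
    intro h3p X Y Z f g hfg
    exact hR3m f g hfg (aux_pullbacks S' hS' (h3p f g (hdsub hfg)))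
  · -- exactness is inherited
    intro hS'i
    have L2 : ∀ ⦃X Y : C⦄ ⦃f : X ⟶ Y⦄, S.IsInflation f → ∀ ⦃W : C⦄ (h : X ⟶ W),
        ∃ (Q : C) (q₁ : Y ⟶ Q) (q₂ : W ⟶ Q), IsPushout f h q₁ q₂ ∧ S.IsInflation q₂ := by
      intro X Y f hfI W h
      obtain ⟨A, p, hfp⟩ := hfI
      have pairfp := S.kernelCokernel hfp
      obtain ⟨hpcolim⟩ := pairfp.isCokernel
      have hpepi : Epi p := aux_epi hpcolim
      obtain ⟨Q, q₁, q₂, hpo, hq₂⟩ := hS'i.L2 ⟨A, p, hsub hfp⟩ h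
      have hw0 : f ≫ p = h ≫ (0 : W ⟶ A) := by rw [pairfp.comp_zero, comp_zero]
      have hq₁g' : q₁ ≫ hpo.desc p 0 hw0 = p := hpo.inl_desc _ _ _
      have hq₂g' : q₂ ≫ hpo.desc p 0 hw0 = 0 := hpo.inr_desc _ _ _
      have hdesc : ∀ {T : C} (e' : Q ⟶ T), q₂ ≫ e' = 0 → {u : A ⟶ T // p ≫ u = q₁ ≫ e'} := by
        intro T e' he'
        have hk : f ≫ q₁ ≫ e' = 0 := by
          rw [← Category.assoc, hpo.w, Category.assoc, he', comp_zero]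
        obtain ⟨u, hu⟩ := CokernelCofork.IsColimit.desc' hpcolim (q₁ ≫ e') hk
        exact ⟨u, by simpa using hu⟩
      have hg'colim : IsColimit (CokernelCofork.ofπ (hpo.desc p 0 hw0) hq₂g') := by
        refine CokernelCofork.IsColimit.ofπ _ _
          (fun {T} e' he' => (hdesc e' he').1) ?_ ?_
        · intro T e' he'
          apply hpo.hom_ext
          · rw [← Category.assoc, hq₁g']
            exact (hdesc e' he').2
          · rw [← Category.assoc, hq₂g', zero_comp, he']
        · intro T e' he' m' hm'
          have h1 : p ≫ m' = q₁ ≫ e' := by rw [← hq₁g', Category.assoc, hm']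
          rw [← cancel_epi p, h1, (hdesc e' he').2]
      have hq₂conf' : S'.IsConflation q₂ (hpo.desc p 0 hw0) :=
        aux_conf_of_cokernel S' hq₂ hq₂g' hg'colim
      have hg'S : S.IsDeflation (hpo.desc p 0 hw0) := by
        refine hR3m q₁ _ ?_ (aux_pullbacks S' hS' ⟨W, q₂, hq₂conf'⟩)
        rw [hq₁g']
        exact ⟨X, f, hfp⟩
      have pairq₂ := S'.kernelCokernel hq₂conf'
      obtain ⟨hq₂ker⟩ := pairq₂.isKernel
      exact ⟨Q, q₁, q₂, hpo, A, hpo.desc p 0 hw0,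
        aux_conf_of_kernel S hg'S pairq₂.comp_zero hq₂ker⟩
    constructor
    · -- (L0)
      obtain ⟨X, f, hc⟩ := hS.R0
      have pair := S.kernelCokernel hc
      have hf0 : f = 0 := by
        calc f = f ≫ 𝟙 (0 : C) := (Category.comp_id f).symm
        _ = f ≫ 0 := by rw [Limits.id_zero]
        _ = 0 := comp_zero
      obtain ⟨hl⟩ := pair.isKernel
      have hX : 𝟙 X = (0 : X ⟶ X) := Fork.IsLimit.hom_ext hl (by simp [hf0])
      have e : X ≅ (0 : C) :=
        ⟨0, 0, by rw [zero_comp]; exact hX.symm, by rw [zero_comp]; exact Limits.id_zero.symm⟩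
      refine ⟨(0 : C), 𝟙 (0 : C), S.iso_closed e (Iso.refl (0 : C)) (Iso.refl (0 : C)) ?_ ?_ hc⟩
      · rw [Limits.zero_of_to_zero e.hom, Limits.zero_of_to_zero f]; simp
      · simp
    · -- (L1)
      intro X Y Z f g hf hg
      obtain ⟨A, p, hfp⟩ := hf
      obtain ⟨B, q, hgq⟩ := hg
      have pairfp := S.kernelCokernel hfp
      have pairgq := S.kernelCokernel hgq
      obtain ⟨hpcolim⟩ := pairfp.isCokernel
      obtain ⟨hqcolim⟩ := pairgq.isCokernel
      have hpepi : Epi p := aux_epi hpcolim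
      have hqepi : Epi q := aux_epi hqcolim
      obtain ⟨Cob, c, hfgc⟩ := hS'i.L1 ⟨A, p, hsub hfp⟩ ⟨B, q, hsub hgq⟩
      have pairc := S'.kernelCokernel hfgc
      obtain ⟨hccolim⟩ := pairc.isCokernel
      have hcepi : Epi c := aux_epi hccolim
      -- the morphism π : Cob ⟶ B with c ≫ π = q
      obtain ⟨π, hcπ⟩ : {l : Cob ⟶ B // c ≫ l = q} := by
        obtain ⟨l, hl⟩ := CokernelCofork.IsColimit.desc' hccolim q
          (by rw [Category.assoc, pairgq.comp_zero, comp_zero])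
        exact ⟨l, by simpa using hl⟩
      -- the morphism m : A ⟶ Cob with p ≫ m = g ≫ c
      obtain ⟨m, hpm⟩ : {l : A ⟶ Cob // p ≫ l = g ≫ c} := by
        obtain ⟨l, hl⟩ := CokernelCofork.IsColimit.desc' hpcolim (g ≫ c)
          (by rw [← Category.assoc, pairc.comp_zero])
        exact ⟨l, by simpa using hl⟩
      have hw : g ≫ c = p ≫ m := hpm.symm
      -- the Noether square is a pushout square
      have hpodesc : ∀ (s : PushoutCocone g p), {θ : Cob ⟶ s.pt // c ≫ θ = s.inl} := by
        intro s
        have hk : (f ≫ g) ≫ s.inl = 0 := by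
          rw [Category.assoc, s.condition, ← Category.assoc, pairfp.comp_zero, zero_comp]
        obtain ⟨θ, hθ⟩ := CokernelCofork.IsColimit.desc' hccolim s.inl hk
        exact ⟨θ, by simpa using hθ⟩
      have hpoC : IsPushout g p c m := by
        refine IsPushout.of_isColimit (PushoutCocone.IsColimit.mk hw
          (fun s => (hpodesc s).1) (fun s => (hpodesc s).2)
          (fun s => ?_) (fun s m' h₁ h₂ => ?_))
        · rw [← cancel_epi p, ← Category.assoc, hpm, Category.assoc, (hpodesc s).2,
            s.condition]
        · rw [← cancel_epi c, h₁, (hpodesc s).2]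
      -- the pushout provided by (L2) of S'
      obtain ⟨Q₀, u₁, u₂, hpo₀, hu₂⟩ := hS'i.L2 ⟨B, q, hsub hgq⟩ p
      have hminfl : S'.IsInflation m := by
        refine aux_isInfl_of_iso S' (Iso.refl A) (hpo₀.isoIsPushout _ _ hpoC) ?_ hu₂
        simpa using IsPushout.inr_isoIsPushout_hom hpo₀ hpoC
      have hmπ : m ≫ π = 0 := by
        rw [← cancel_epi p, ← Category.assoc, hpm, Category.assoc, hcπ, pairgq.comp_zero,
          comp_zero]
      -- π is a cokernel of m
      have hπepi : Epi π := epi_of_epi_fac hcπ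
      have hqdesc : ∀ {T : C} (e' : Cob ⟶ T), m ≫ e' = 0 → {u : B ⟶ T // q ≫ u = c ≫ e'} := by
        intro T e' he'
        have hk : g ≫ c ≫ e' = 0 := by
          rw [← Category.assoc, hw, Category.assoc, he', comp_zero]
        obtain ⟨u, hu⟩ := CokernelCofork.IsColimit.desc' hqcolim (c ≫ e') hk
        exact ⟨u, by simpa using hu⟩
      have hπcolim : IsColimit (CokernelCofork.ofπ π hmπ) := by
        refine CokernelCofork.IsColimit.ofπ _ _
          (fun {T} e' he' => (hqdesc e' he').1) ?_ ?_
        · intro T e' he'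
          rw [← cancel_epi c, ← Category.assoc, hcπ, (hqdesc e' he').2]
        · intro T e' he' m' hm'
          rw [← cancel_epi π, hm', ← cancel_epi c, ← Category.assoc, hcπ, (hqdesc e' he').2]
      have hmπconf : S'.IsConflation m π := aux_conf_of_cokernel S' hminfl hmπ hπcolim
      have pairmπ := S'.kernelCokernel hmπconf
      obtain ⟨hmkerlim⟩ := pairmπ.isKernel
      have hmmono : Mono m := aux_mono hmkerlim
      -- pull back q along π
      obtain ⟨P, a, b, hpb, hb⟩ := hS.R2 ⟨Y, g, hgq⟩ π
      have hδ : (b - a ≫ c) ≫ π = 0 := by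
        rw [Preadditive.sub_comp, Category.assoc, hcπ, hpb.w, sub_self]
      obtain ⟨w, hwm⟩ : {l : P ⟶ A // l ≫ m = b - a ≫ c} := by
        obtain ⟨l, hl⟩ := KernelFork.IsLimit.lift' hmkerlim (b - a ≫ c) hδ
        exact ⟨l, by simpa using hl⟩
      have hφr : biprod.lift a w ≫ biprod.desc c m = b := by
        rw [biprod.lift_desc, hwm]; abel
      have hψcond : (biprod.fst : Z ⊞ A ⟶ Z) ≫ q = biprod.desc c m ≫ π := by
        apply biprod.hom_ext'
        · rw [← Category.assoc, ← Category.assoc, biprod.inl_fst, biprod.inl_desc,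
            Category.id_comp, hcπ]
        · rw [← Category.assoc, ← Category.assoc, biprod.inr_fst, biprod.inr_desc, zero_comp,
            hmπ]
      have hiso1 : biprod.lift a w ≫ hpb.lift biprod.fst (biprod.desc c m) hψcond = 𝟙 P := by
        apply hpb.hom_ext
        · rw [Category.assoc, hpb.lift_fst, biprod.lift_fst, Category.id_comp]
        · rw [Category.assoc, hpb.lift_snd, hφr, Category.id_comp]
      have hsnd : biprod.desc c m - biprod.fst ≫ c = biprod.snd ≫ m := by
        apply biprod.hom_ext'
        · rw [Preadditive.comp_sub, biprod.inl_desc, ← Category.assoc, biprod.inl_fst,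
            Category.id_comp, sub_self, ← Category.assoc, biprod.inl_snd, zero_comp]
        · rw [Preadditive.comp_sub, biprod.inr_desc, ← Category.assoc, biprod.inr_fst,
            zero_comp, sub_zero, ← Category.assoc, biprod.inr_snd, Category.id_comp]
      have hiso2 : hpb.lift biprod.fst (biprod.desc c m) hψcond ≫ biprod.lift a w
          = 𝟙 (Z ⊞ A) := by
        apply biprod.hom_ext
        · rw [Category.assoc, biprod.lift_fst, hpb.lift_fst, Category.id_comp]
        · rw [Category.assoc, biprod.lift_snd, Category.id_comp, ← cancel_mono m,
            Category.assoc, hwm, Preadditive.comp_sub, hpb.lift_snd, ← Category.assoc,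
            hpb.lift_fst]
          exact hsnd
      have hr : S.IsDeflation (biprod.desc c m) := by
        refine aux_isDefl_of_iso S
          (Iso.mk (biprod.lift a w) (hpb.lift biprod.fst (biprod.desc c m) hψcond) hiso1 hiso2)
          (Iso.refl Cob) ?_ hb
        simpa using hφr.symm
      -- biprod.map (𝟙 Z) p is a deflation
      obtain ⟨P₀, e₁, e₂, hpb₀, he₂⟩ := hS.R2 ⟨X, f, hfp⟩ (biprod.snd : Z ⊞ A ⟶ A)
      have hmap : S.IsDeflation (biprod.map (𝟙 Z) p) := by
        refine aux_isDefl_of_iso S (hpb₀.isoIsPullback _ _ (aux_biprod_map_pullback p))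
          (Iso.refl _) ?_ he₂
        simpa using (IsPullback.isoIsPullback_hom_snd hpb₀ (aux_biprod_map_pullback p)).symm
      have hcomp : S.IsDeflation (biprod.map (𝟙 Z) p ≫ biprod.desc c m) := hS.R1 hmap hr
      have hteq : biprod.desc (𝟙 Z) g ≫ c = biprod.map (𝟙 Z) p ≫ biprod.desc c m := by
        apply biprod.hom_ext'
        · rw [← Category.assoc, biprod.inl_desc, Category.id_comp, ← Category.assoc,
            biprod.inl_map, Category.id_comp, biprod.inl_desc]
        · rw [← Category.assoc, biprod.inr_desc, ← Category.assoc, biprod.inr_map,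
            Category.assoc, biprod.inr_desc, hpm]
      have hcS : S.IsDeflation c := by
        refine hR3m (biprod.desc (𝟙 Z) g) c ?_ (aux_pullbacks S' hS' ⟨X, f ≫ g, hfgc⟩)
        rw [hteq]
        exact hcomp
      obtain ⟨hfgker⟩ := pairc.isKernel
      exact ⟨Cob, c, aux_conf_of_kernel S hcS pairc.comp_zero hfgker⟩
    · -- (L2)
      exact L2
end
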